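/- arXiv:2308.08903 — 2 statements merged into one kernel-verified Lean document; each statement's English description precedes it below -/
import Mathlib

section
/- Upper bound of Theorem 3.1: Let (f_1,…,f_n) be a profile of piecewise constant value density functions on [0,1] and let f_1' be any piecewise constant density with positive total value. Let A be a complete allocation maximizing the Nash product ∏_{i=1}^n v_i(A_i) over complete allocations with respect to (f_1,…,f_n), and let A' be a complete allocation maximizing (∫_{A_1'} f_1'(x) dx) · ∏_{j=2}^n v_j(A_j') over complete allocations (i.e., A' is MNW with respect to the profile (f_1', f_2,…,f_n)). Then v_1(A_1') ≤ 2 · v_1(A_1). Consequently, the incentive ratio of the Maximum Nash Welfare mechanism without free disposal is at most 2. -/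
/-!
The values that complete allocations give to the agents form a convex set: for two complete
allocations, refine `[0, 1]` into cells on which every density is constant and every piece of
either allocation is all or nothing, and give the left `λ`-part of each cell to its owner in the
first allocation and the rest to its owner in the second. At a maximiser `a` of the Nash product
over a convex set with `a > 0`, the first-order condition reads `∑ i, b i / a i ≤ N` for every `b`
in the set. Applied to `A'` against `A` under `f`, and to `A` against `A'` under the reported
profile, and added up, the terms of each agent `j ≠ 1` pair up as `x + 1/x ≥ 2`, which leaves
`v₁(A'₁) / v₁(A₁) ≤ 2 (n + 1) - 2 n = 2`.
-/

open MeasureTheory Set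

noncomputable def cakeval (f : ℝ → ℝ) (S : Set ℝ) : ℝ := ∫ x in S, f x

def PiecewiseConstant (f : ℝ → ℝ) : Prop :=
  ∃ (m : ℕ) (a : Fin (m + 1) → ℝ) (c : Fin m → ℝ),
    a 0 = 0 ∧ a (Fin.last m) = 1 ∧ Monotone a ∧
    ∀ t : Fin m, ∀ x ∈ Set.Ico (a t.castSucc) (a t.succ), f x = c t

def ValidDensity (f : ℝ → ℝ) : Prop :=
  PiecewiseConstant f ∧ (∀ x, 0 ≤ f x) ∧ 0 < cakeval f (Set.Icc 0 1)

def FinUnionIcc (S : Set ℝ) : Prop :=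
  ∃ (k : ℕ) (a b : Fin k → ℝ), S = ⋃ j, Set.Icc (a j) (b j)

def IsAllocOn {n : ℕ} (C : Set ℝ) (A : Fin n → Set ℝ) : Prop :=
  (∀ i, A i ⊆ C) ∧ (∀ i, FinUnionIcc (A i)) ∧
    Pairwise fun i j => volume (A i ∩ A j) = 0

def IsAlloc {n : ℕ} (A : Fin n → Set ℝ) : Prop := IsAllocOn (Set.Icc 0 1) A

def CompleteAlloc {n : ℕ} (A : Fin n → Set ℝ) : Prop := (⋃ i, A i) = Set.Icc (0 : ℝ) 1

noncomputable def nashProd {n : ℕ} (f : Fin n → ℝ → ℝ) (A : Fin n → Set ℝ) : ℝ :=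
  ∏ i, cakeval (f i) (A i)

def IsMNWOn {n : ℕ} (C : Set ℝ) (f : Fin n → ℝ → ℝ) (A : Fin n → Set ℝ) : Prop :=
  IsAllocOn C A ∧ ∀ B : Fin n → Set ℝ, IsAllocOn C B → nashProd f B ≤ nashProd f A

def IsMNW {n : ℕ} (f : Fin n → ℝ → ℝ) (A : Fin n → Set ℝ) : Prop :=
  IsMNWOn (Set.Icc 0 1) f A

def IsCompleteMNW {n : ℕ} (f : Fin n → ℝ → ℝ) (A : Fin n → Set ℝ) : Prop :=
  IsAlloc A ∧ CompleteAlloc A ∧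
    ∀ B : Fin n → Set ℝ, IsAlloc B → CompleteAlloc B → nashProd f B ≤ nashProd f A

section NashProduct

variable {ι : Type*} [Fintype ι] {S : Set (ι → ℝ)} {a b : ι → ℝ}

theorem sum_div_le_card_of_isMaxOn_prod (hS : Convex ℝ S) (ha : a ∈ S) (hb : b ∈ S)
    (hpos : ∀ i, 0 < a i) (hmax : IsMaxOn (fun v ↦ ∏ i, v i) S a) :
    ∑ i, b i / a i ≤ Fintype.card ι := by
  classical
  have hderiv := hmax.localize.hasFDerivWithinAt_nonpos
    (hasFDerivAt_finsetProd (u := Finset.univ) (x := a)).hasFDerivWithinAt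
    (sub_mem_posTangentConeAt_of_segment_subset (hS.segment_subset ha hb))
  have hprod : 0 < ∏ i, a i := Finset.prod_pos fun i _ ↦ hpos i
  have key : (∏ i, a i) * (∑ i, b i / a i - Fintype.card ι) ≤ 0 := by
    convert hderiv using 1
    simp only [FunLike.coe_sum, Finset.sum_apply, FunLike.coe_smul,
      Pi.smul_apply, ContinuousLinearMap.proj_apply, Pi.sub_apply, smul_eq_mul]
    rw [Finset.card_univ.symm, Finset.cast_card, ← Finset.sum_sub_distrib, Finset.mul_sum]
    refine Finset.sum_congr rfl fun i _ ↦ ?_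
    rw [← Finset.mul_prod_erase _ _ (Finset.mem_univ i)]
    field_simp [(hpos i).ne']
  nlinarith

theorem pos_of_isMaxOn_prod (hnonneg : ∀ v ∈ S, ∀ i, 0 ≤ v i) (hex : ∃ v ∈ S, ∀ i, 0 < v i)
    (ha : a ∈ S) (hmax : IsMaxOn (fun v ↦ ∏ i, v i) S a) (i : ι) : 0 < a i := by
  obtain ⟨v, hv, hvpos⟩ := hex
  refine (hnonneg a ha i).lt_of_ne' fun hai ↦ ?_
  have : ∏ j, v j ≤ ∏ j, a j := hmax hv
  rw [Finset.prod_eq_zero (Finset.mem_univ i) hai] at this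
  exact this.not_gt (Finset.prod_pos fun j _ ↦ hvpos j)

theorem Convex.exists_forall_pos [Nonempty ι] (hS : Convex ℝ S)
    (hnonneg : ∀ v ∈ S, ∀ i, 0 ≤ v i) (h : ∀ i, ∃ v ∈ S, 0 < v i) : ∃ v ∈ S, ∀ i, 0 < v i := by
  choose w hwS hwpos using h
  have hcard : (0 : ℝ) < Fintype.card ι := by exact_mod_cast Fintype.card_pos
  refine ⟨∑ j, (Fintype.card ι : ℝ)⁻¹ • w j,
    hS.sum_mem (fun _ _ ↦ by positivity) (by simp [hcard.ne']) fun j _ ↦ hwS j, fun i ↦ ?_⟩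
  have hterm : ∀ j, 0 ≤ ((Fintype.card ι : ℝ)⁻¹ • w j) i := fun j ↦
    mul_nonneg (inv_nonneg.2 hcard.le) (hnonneg _ (hwS j) i)
  calc 0 < ((Fintype.card ι : ℝ)⁻¹ • w i) i := mul_pos (inv_pos.2 hcard) (hwpos i)
    _ ≤ (∑ j, (Fintype.card ι : ℝ)⁻¹ • w j) i := by
      rw [Finset.sum_apply]
      exact Finset.single_le_sum (fun j _ ↦ hterm j) (Finset.mem_univ i)

end NashProduct

section FinUnionIcc

variable {S T : Set ℝ}

theorem finUnionIcc_iUnion {ι : Type*} [Finite ι] (a b : ι → ℝ) :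
    FinUnionIcc (⋃ i, Icc (a i) (b i)) := by
  obtain ⟨k, ⟨e⟩⟩ := Finite.exists_equiv_fin ι
  exact ⟨k, a ∘ e.symm, b ∘ e.symm, (e.symm.surjective.iUnion_comp fun i ↦ Icc (a i) (b i)).symm⟩

theorem FinUnionIcc.union (hS : FinUnionIcc S) (hT : FinUnionIcc T) : FinUnionIcc (S ∪ T) := by
  obtain ⟨k, a, b, rfl⟩ := hS
  obtain ⟨l, c, d, rfl⟩ := hT
  simpa [iUnion_sum] using finUnionIcc_iUnion (Sum.elim a c) (Sum.elim b d)

theorem FinUnionIcc.inter (hS : FinUnionIcc S) (hT : FinUnionIcc T) : FinUnionIcc (S ∩ T) := by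
  obtain ⟨k, a, b, rfl⟩ := hS
  obtain ⟨l, c, d, rfl⟩ := hT
  simpa [iUnion_inter_iUnion, Icc_inter_Icc, iUnion_prod'] using
    finUnionIcc_iUnion (fun p : Fin k × Fin l ↦ max (a p.1) (c p.2))
      (fun p ↦ min (b p.1) (d p.2))

theorem FinUnionIcc.measurableSet (hS : FinUnionIcc S) : MeasurableSet S := by
  obtain ⟨k, a, b, rfl⟩ := hS
  exact .iUnion fun _ ↦ measurableSet_Icc

end FinUnionIcc

def ConstOnGaps (E : Finset ℝ) (g : ℝ → ℝ) : Prop :=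
  ∀ p r, 0 ≤ p → r ≤ 1 → (∀ e ∈ E, e ∉ Ioo p r) → ∃ c, ∀ x ∈ Ioo p r, g x = c

theorem ConstOnGaps.mono {E E' : Finset ℝ} {g : ℝ → ℝ} (hg : ConstOnGaps E g) (h : E ⊆ E') :
    ConstOnGaps E' g :=
  fun p r hp hr hE' ↦ hg p r hp hr fun e he ↦ hE' e (h he)

theorem PiecewiseConstant.exists_constOnGaps {f : ℝ → ℝ} (hf : PiecewiseConstant f) :
    ∃ E, ConstOnGaps E f := by
  classical
  obtain ⟨m, a, c, ha0, ha1, ha, hc⟩ := hf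
  refine ⟨Finset.univ.image a, fun p r hp hr hE ↦ ?_⟩
  rcases le_or_gt r p with hrp | hpr
  · exact ⟨0, fun x hx ↦ absurd (hx.1.trans hx.2) hrp.not_gt⟩
  obtain ⟨t, ht⟩ : ∃ t : Fin m, a t.castSucc ≤ p ∧ p < a t.succ := by
    obtain ⟨j, hjp, hjmax⟩ := (Finset.univ.filter fun j ↦ a j ≤ p).exists_max_image id
      ⟨0, by simp [ha0, hp]⟩
    rw [Finset.mem_filter] at hjp
    have hj : j ≠ Fin.last m := fun h ↦ by linarith [h ▸ hjp.2]
    refine ⟨j.castPred hj, by simpa using hjp.2, not_le.1 fun h ↦ ?_⟩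
    have := hjmax (j.castPred hj).succ (by simpa using h)
    exact this.not_gt (by simpa using Fin.castSucc_lt_succ (i := j.castPred hj))
  have hr' : r ≤ a t.succ :=
    not_lt.1 fun h ↦ hE _ (Finset.mem_image_of_mem a (Finset.mem_univ _)) ⟨ht.2, h⟩
  exact ⟨c t, fun x hx ↦ hc t x ⟨ht.1.trans hx.1.le, hx.2.trans_le hr'⟩⟩

theorem FinUnionIcc.exists_subset_or_disjoint {S : Set ℝ} (hS : FinUnionIcc S) :
    ∃ E : Finset ℝ, ∀ p r, (∀ e ∈ E, e ∉ Ioo p r) → Ioo p r ⊆ S ∨ Disjoint (Ioo p r) S := by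
  classical
  obtain ⟨k, a, b, rfl⟩ := hS
  refine ⟨Finset.univ.image a ∪ Finset.univ.image b, fun p r hE ↦ ?_⟩
  by_cases h : ∃ x ∈ Ioo p r, x ∈ ⋃ j, Icc (a j) (b j)
  · obtain ⟨x, hx, hxS⟩ := h
    obtain ⟨j, hj⟩ := mem_iUnion.1 hxS
    have haj : a j ≤ p := not_lt.1 fun h ↦ hE (a j) (by simp) ⟨h, hj.1.trans_lt hx.2⟩
    have hbj : r ≤ b j := not_lt.1 fun h ↦ hE (b j) (by simp) ⟨hx.1.trans_le hj.2, h⟩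
    exact .inl fun y hy ↦ mem_iUnion.2 ⟨j, haj.trans hy.1.le, hy.2.le.trans hbj⟩
  · push Not at h
    exact .inr (Set.disjoint_left.2 h)

theorem ConstOnGaps.exists_indicator {E : Finset ℝ} {g : ℝ → ℝ} (hg : ConstOnGaps E g)
    {S : Set ℝ} (hS : FinUnionIcc S) : ∃ E', ConstOnGaps E' (S.indicator g) := by
  classical
  obtain ⟨ES, hES⟩ := hS.exists_subset_or_disjoint
  refine ⟨E ∪ ES, fun p r hp hr hE ↦ ?_⟩
  obtain ⟨c, hc⟩ := hg p r hp hr fun e he ↦ hE e (Finset.mem_union_left _ he)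
  rcases hES p r fun e he ↦ hE e (Finset.mem_union_right _ he) with hsub | hdisj
  · exact ⟨c, fun x hx ↦ by rw [indicator_of_mem (hsub hx), hc x hx]⟩
  · exact ⟨0, fun x hx ↦ indicator_of_notMem (Set.disjoint_left.1 hdisj hx) _⟩

def ConstOnCells (q : ℕ → ℝ) (g : ℝ → ℝ) : Prop :=
  ∀ k, ∃ c, ∀ x ∈ Ioo (q k) (q (k + 1)), g x = c

theorem exists_grid (E : Finset ℝ) :
    ∃ (M : ℕ) (q : ℕ → ℝ), Monotone q ∧ 0 < M ∧ q 0 = 0 ∧ q M = 1 ∧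
      ∀ g, ConstOnGaps E g → ConstOnCells q g := by
  classical
  set G : Finset ℝ := insert 0 (insert 1 (E.filter (· ∈ Icc (0 : ℝ) 1))) with hG
  have hG01 : ∀ x ∈ G, x ∈ Icc (0 : ℝ) 1 := by
    intro x hx
    simp only [hG, Finset.mem_insert, Finset.mem_filter] at hx
    rcases hx with rfl | rfl | hx
    exacts [⟨le_rfl, zero_le_one⟩, ⟨zero_le_one, le_rfl⟩, hx.2]
  obtain ⟨M, hM⟩ : ∃ M, G.card = M + 1 :=
    Nat.exists_eq_succ_of_ne_zero (Finset.card_ne_zero.2 ⟨0, by simp [hG]⟩)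
  set e := G.orderEmbOfFin hM
  -- `q` lists `G` increasingly and then stays at its largest element `1`.
  set q : ℕ → ℝ := fun k ↦ e (Fin.clamp k M)
  have hqG : ∀ k, q k ∈ G := fun k ↦ G.orderEmbOfFin_mem hM _
  have hq0 : q 0 = 0 := by
    have h := G.orderEmbOfFin_zero hM M.succ_pos
    refine le_antisymm ?_ (hG01 _ (hqG 0)).1
    show e (Fin.clamp 0 M) ≤ 0
    rw [show Fin.clamp 0 M = ⟨0, M.succ_pos⟩ from Fin.ext (by simp [Fin.clamp]), h]
    exact G.min'_le 0 (by simp [hG])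
  have hqM : q M = 1 := by
    have h := G.orderEmbOfFin_last hM M.succ_pos
    refine le_antisymm (hG01 _ (hqG M)).2 ?_
    show 1 ≤ e (Fin.clamp M M)
    rw [show Fin.clamp M M = ⟨M + 1 - 1, by omega⟩ from Fin.ext (by simp [Fin.clamp]), h]
    exact G.le_max' 1 (by simp [hG])
  have hmono : Monotone q := e.monotone.comp fun i j hij ↦ by
    simp only [Fin.clamp, Fin.mk_le_mk]; omega
  refine ⟨M, q, hmono, Nat.pos_of_ne_zero fun h0 ↦ ?_, hq0, hqM, fun g hg k ↦ ?_⟩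
  · subst h0; linarith
  refine hg _ _ (hG01 _ (hqG k)).1 (hG01 _ (hqG (k + 1))).2 fun x hxE hx ↦ ?_
  have hxG : x ∈ G := by
    simp only [hG, Finset.mem_insert, Finset.mem_filter]
    exact .inr (.inr ⟨hxE, (hG01 _ (hqG k)).1.trans hx.1.le, hx.2.le.trans (hG01 _ (hqG _)).2⟩)
  obtain ⟨j, rfl⟩ : x ∈ Set.range e := by rwa [G.range_orderEmbOfFin hM]
  have h1 := e.lt_iff_lt.1 hx.1
  have h2 := e.lt_iff_lt.1 hx.2
  simp only [Fin.clamp, Fin.lt_def] at h1 h2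
  omega

theorem volume_Icc_inter_Icc_of_le {a b c d : ℝ} (h : b ≤ c) : volume (Icc a b ∩ Icc c d) = 0 :=
  measure_mono_null (t := Icc c b) (fun _ hx ↦ ⟨hx.2.1, hx.1.2⟩) (by simp [h])

theorem setIntegral_Icc_of_eqOn_Ioo {g : ℝ → ℝ} {u w c : ℝ} (huw : u ≤ w)
    (hg : ∀ x ∈ Ioo u w, g x = c) : ∫ x in Icc u w, g x = c * (w - u) := by
  rw [integral_Icc_eq_integral_Ioo, setIntegral_congr_fun measurableSet_Ioo hg,
    setIntegral_const, Real.volume_real_Ioo_of_le huw, smul_eq_mul, mul_comm]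

theorem integrableOn_Icc_of_eqOn_Ioo {g : ℝ → ℝ} {u w c : ℝ} (hg : ∀ x ∈ Ioo u w, g x = c) :
    IntegrableOn g (Icc u w) :=
  ((integrableOn_const (by simp)).congr_fun (fun x hx ↦ (hg x hx).symm)
    measurableSet_Ioo).congr_set_ae Ioo_ae_eq_Icc.symm

section Cells

variable {q : ℕ → ℝ} {M : ℕ} {g : ℝ → ℝ} {α β s : ℝ}

def cellPoint (q : ℕ → ℝ) (α : ℝ) (k : ℕ) : ℝ := q k + α * (q (k + 1) - q k)

def cellSlice (q : ℕ → ℝ) (M : ℕ) (α β : ℝ) : Set ℝ :=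
  ⋃ k : Fin M, Icc (cellPoint q α k) (cellPoint q β k)

@[simp] theorem cellPoint_zero (q : ℕ → ℝ) (k : ℕ) : cellPoint q 0 k = q k := by
  simp [cellPoint]

@[simp] theorem cellPoint_one (q : ℕ → ℝ) (k : ℕ) : cellPoint q 1 k = q (k + 1) := by
  simp [cellPoint]

theorem cellPoint_mono (hq : Monotone q) (k : ℕ) (hαβ : α ≤ β) :
    cellPoint q α k ≤ cellPoint q β k := by
  have := hq k.le_succ
  unfold cellPoint; nlinarith

theorem cellPoint_mem_Icc (hq : Monotone q) (k : ℕ) (h0 : 0 ≤ α) (h1 : α ≤ 1) :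
    cellPoint q α k ∈ Icc (q k) (q (k + 1)) := by
  simpa using And.intro (cellPoint_mono hq k h0) (cellPoint_mono hq k h1)

theorem finUnionIcc_cellSlice (q : ℕ → ℝ) (M : ℕ) (α β : ℝ) :
    FinUnionIcc (cellSlice q M α β) :=
  finUnionIcc_iUnion _ _

theorem volume_Icc_cellPoint_inter_of_lt (hq : Monotone q) {k j : ℕ} (hkj : k < j)
    {α β α' β' : ℝ} (hβ : β ≤ 1) (hα' : 0 ≤ α') :
    volume (Icc (cellPoint q α k) (cellPoint q β k) ∩
      Icc (cellPoint q α' j) (cellPoint q β' j)) = 0 := by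
  refine volume_Icc_inter_Icc_of_le ?_
  calc cellPoint q β k ≤ cellPoint q 1 k := cellPoint_mono hq k hβ
    _ = q (k + 1) := cellPoint_one q k
    _ ≤ q j := hq hkj
    _ = cellPoint q 0 j := (cellPoint_zero q j).symm
    _ ≤ cellPoint q α' j := cellPoint_mono hq j hα'

theorem cellSlice_zero_one (hq : Monotone q) (hM : 0 < M) :
    cellSlice q M 0 1 = Icc (q 0) (q M) := by
  simp only [cellSlice, cellPoint_zero, cellPoint_one]
  refine Subset.antisymm (iUnion_subset fun k ↦ Icc_subset_Icc (hq k.val.zero_le) (hq k.isLt))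
    fun x hx ↦ ?_
  obtain ⟨k, hxk, hmin⟩ : ∃ k, x ≤ q (k + 1) ∧ ∀ j < k, ¬x ≤ q (j + 1) :=
    have hex : ∃ k, x ≤ q (k + 1) := ⟨M - 1, by rw [Nat.sub_add_cancel hM]; exact hx.2⟩
    ⟨Nat.find hex, Nat.find_spec hex, fun _ ↦ Nat.find_min hex⟩
  have hkM : k < M := not_le.1 fun h ↦
    hmin (M - 1) (by omega) (by rw [Nat.sub_add_cancel hM]; exact hx.2)
  refine mem_iUnion.2 ⟨⟨k, hkM⟩, ?_, hxk⟩
  rcases k with _ | j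
  · exact hx.1
  · exact (not_le.1 (hmin j j.lt_succ_self)).le

theorem cellSlice_union (hq : Monotone q) (hs0 : 0 ≤ s) (hs1 : s ≤ 1) :
    cellSlice q M 0 s ∪ cellSlice q M s 1 = cellSlice q M 0 1 := by
  simp only [cellSlice, ← iUnion_union_distrib]
  exact iUnion_congr fun k ↦
    Icc_union_Icc_eq_Icc (cellPoint_mono hq k hs0) (cellPoint_mono hq k hs1)

theorem volume_cellSlice_inter (hq : Monotone q) (hs0 : 0 ≤ s) (hs1 : s ≤ 1) :
    volume (cellSlice q M 0 s ∩ cellSlice q M s 1) = 0 := by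
  simp only [cellSlice, iUnion_inter_iUnion]
  refine measure_iUnion_null fun k ↦ measure_iUnion_null fun j ↦ ?_
  rcases lt_trichotomy k j with h | rfl | h
  · exact volume_Icc_cellPoint_inter_of_lt hq h hs1 hs0
  · exact volume_Icc_inter_Icc_of_le le_rfl
  · rw [inter_comm]
    exact volume_Icc_cellPoint_inter_of_lt hq h le_rfl le_rfl

theorem integrableOn_cellSlice (hq : Monotone q) (hg : ConstOnCells q g) (h0 : 0 ≤ α)
    (h1 : β ≤ 1) : IntegrableOn g (cellSlice q M α β) := by
  refine integrableOn_finite_iUnion.2 fun k ↦ ?_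
  obtain ⟨c, hc⟩ := hg k
  refine integrableOn_Icc_of_eqOn_Ioo (c := c) fun x hx ↦ hc x ⟨?_, ?_⟩
  · exact (by simpa using cellPoint_mono hq k h0 : q k ≤ _).trans_lt hx.1
  · exact hx.2.trans_le (by simpa using cellPoint_mono hq k h1 : _ ≤ q (k + 1))

theorem setIntegral_cellSlice (hq : Monotone q) (hM : 0 < M) (hg : ConstOnCells q g)
    (h0 : 0 ≤ α) (hαβ : α ≤ β) (h1 : β ≤ 1) :
    ∫ x in cellSlice q M α β, g x = (β - α) * ∫ x in Icc (q 0) (q M), g x := by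
  choose c hc using hg
  have key : ∀ α β, 0 ≤ α → α ≤ β → β ≤ 1 →
      ∫ x in cellSlice q M α β, g x = (β - α) * ∑ k : Fin M, c k * (q (k + 1) - q k) := by
    intro α β h0 hαβ h1
    have hdisj : Pairwise (Function.onFun (AEDisjoint volume)
        fun k : Fin M ↦ Icc (cellPoint q α k) (cellPoint q β k)) := by
      intro k j hkj
      rcases lt_or_gt_of_ne (Fin.val_injective.ne hkj) with h | h
      · exact volume_Icc_cellPoint_inter_of_lt hq h h1 h0
      · exact AEDisjoint.symm (volume_Icc_cellPoint_inter_of_lt hq h h1 h0)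
    rw [cellSlice, integral_iUnion_ae (fun _ ↦ measurableSet_Icc.nullMeasurableSet) hdisj
      (integrableOn_cellSlice hq (fun k ↦ ⟨c k, hc k⟩) h0 h1), tsum_fintype, Finset.mul_sum]
    refine Finset.sum_congr rfl fun k _ ↦ ?_
    rw [setIntegral_Icc_of_eqOn_Ioo (cellPoint_mono hq k hαβ) fun x hx ↦ hc k x
      ⟨(cellPoint_mem_Icc hq k h0 (hαβ.trans h1)).1.trans_lt hx.1,
        hx.2.trans_le (cellPoint_mem_Icc hq k (h0.trans hαβ) h1).2⟩, cellPoint, cellPoint]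
    ring
  rw [← cellSlice_zero_one hq hM, key α β h0 hαβ h1, key 0 1 le_rfl zero_le_one le_rfl]
  ring

end Cells

section Allocations

variable {N : ℕ} {f : Fin N → ℝ → ℝ} {A B : Fin N → Set ℝ}

def completeValues (f : Fin N → ℝ → ℝ) : Set (Fin N → ℝ) :=
  (fun C i ↦ cakeval (f i) (C i)) '' {C | IsAlloc C ∧ CompleteAlloc C}

theorem IsCompleteMNW.mem_completeValues (hA : IsCompleteMNW f A) :
    (fun i ↦ cakeval (f i) (A i)) ∈ completeValues f :=
  ⟨A, ⟨hA.1, hA.2.1⟩, rfl⟩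

theorem IsCompleteMNW.isMaxOn (hA : IsCompleteMNW f A) :
    IsMaxOn (fun v ↦ ∏ i, v i) (completeValues f) fun i ↦ cakeval (f i) (A i) := by
  rintro _ ⟨B, ⟨hB, hBc⟩, rfl⟩
  exact hA.2.2 B hB hBc

theorem cakeval_nonneg {g : ℝ → ℝ} (hg : ∀ x, 0 ≤ g x) {S : Set ℝ} (hS : MeasurableSet S) :
    0 ≤ cakeval g S :=
  setIntegral_nonneg hS fun x _ ↦ hg x

theorem completeValues_nonneg (hf : ∀ i x, 0 ≤ f i x) :
    ∀ v ∈ completeValues f, ∀ i, 0 ≤ v i := by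
  rintro _ ⟨C, ⟨hC, -⟩, rfl⟩ i
  exact cakeval_nonneg (hf i) (hC.2.1 i).measurableSet

theorem exists_mem_completeValues_pos (hf : ∀ i, ValidDensity (f i)) (i : Fin N) :
    ∃ v ∈ completeValues f, 0 < v i := by
  classical
  let C : Fin N → Set ℝ := fun j ↦ if j = i then Icc 0 1 else ∅
  have hC : IsAlloc C := by
    refine ⟨fun j ↦ ?_, fun j ↦ ?_, fun j k hjk ↦ ?_⟩
    · by_cases h : j = i <;> simp [C, h]
    · by_cases h : j = i
      · simpa [C, h, iUnion_const] using finUnionIcc_iUnion (fun _ : Unit ↦ (0 : ℝ)) fun _ ↦ 1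
      · simpa [C, h] using finUnionIcc_iUnion (Empty.elim : Empty → ℝ) Empty.elim
    · by_cases h : j = i
      · simp [C, h, Ne.symm (h ▸ hjk)]
      · simp [C, h]
  refine ⟨_, ⟨C, ⟨hC, ?_⟩, rfl⟩, by simpa [C] using (hf i).2.2⟩
  exact (iUnion_subset fun j ↦ by by_cases h : j = i <;> simp [C, h]).antisymm
    (subset_iUnion_of_subset i (by simp [C]))

theorem IsAlloc.inter_union_inter {L R : Set ℝ} (hL : FinUnionIcc L) (hR : FinUnionIcc R)
    (hLR : volume (L ∩ R) = 0) (hcover : Icc 0 1 ⊆ L ∪ R) (hA : IsAlloc A)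
    (hAc : CompleteAlloc A) (hB : IsAlloc B) (hBc : CompleteAlloc B) :
    IsAlloc (fun i ↦ L ∩ A i ∪ R ∩ B i) ∧ CompleteAlloc fun i ↦ L ∩ A i ∪ R ∩ B i := by
  refine ⟨⟨fun i ↦ union_subset (inter_subset_right.trans (hA.1 i))
    (inter_subset_right.trans (hB.1 i)), fun i ↦ (hL.inter (hA.2.1 i)).union
    (hR.inter (hB.2.1 i)), fun i j hij ↦ ?_⟩, ?_⟩
  · refine measure_mono_null (t := A i ∩ A j ∪ B i ∩ B j ∪ L ∩ R) (fun x hx ↦ ?_)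
      (measure_union_null (measure_union_null (hA.2.2 hij) (hB.2.2 hij)) hLR)
    simp only [mem_union, mem_inter_iff] at hx ⊢
    tauto
  · rw [CompleteAlloc, iUnion_union_distrib, ← inter_iUnion, ← inter_iUnion, hAc, hBc,
      ← union_inter_distrib_right, inter_eq_right.2 hcover]

theorem cakeval_inter_union_inter {g : ℝ → ℝ} {L R S T : Set ℝ} (hLR : volume (L ∩ R) = 0)
    (hR : MeasurableSet R) (hS : MeasurableSet S) (hT : MeasurableSet T)
    (hg : IntegrableOn g (L ∪ R)) :
    cakeval g (L ∩ S ∪ R ∩ T) = (∫ x in L, S.indicator g x) + ∫ x in R, T.indicator g x := by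
  rw [cakeval, setIntegral_union₀ (measure_mono_null (inter_subset_inter inter_subset_left
      inter_subset_left) hLR) (hR.inter hT).nullMeasurableSet
      (hg.mono_set (inter_subset_left.trans subset_union_left))
      (hg.mono_set (inter_subset_left.trans subset_union_right)),
    ← setIntegral_indicator hS, ← setIntegral_indicator hT]

theorem convex_completeValues (hf : ∀ i, PiecewiseConstant (f i)) :
    Convex ℝ (completeValues f) := by
  rintro _ ⟨A, ⟨hA, hAc⟩, rfl⟩ _ ⟨B, ⟨hB, hBc⟩, rfl⟩ a b ha hb hab
  obtain ⟨E, hE⟩ : ∃ E, ∀ i, ConstOnGaps E (f i) ∧ ConstOnGaps E ((A i).indicator (f i)) ∧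
      ConstOnGaps E ((B i).indicator (f i)) := by
    choose Ef hEf using fun i ↦ (hf i).exists_constOnGaps
    choose EA hEA using fun i ↦ (hEf i).exists_indicator (hA.2.1 i)
    choose EB hEB using fun i ↦ (hEf i).exists_indicator (hB.2.1 i)
    refine ⟨Finset.univ.biUnion fun i ↦ Ef i ∪ EA i ∪ EB i,
      fun i ↦ ⟨(hEf i).mono ?_, (hEA i).mono ?_, (hEB i).mono ?_⟩⟩ <;>
    exact fun x hx ↦ Finset.mem_biUnion.2 ⟨i, Finset.mem_univ i, by simp [hx]⟩
  obtain ⟨M, q, hq, hM, hq0, hqM, hcells⟩ := exists_grid E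
  have ha1 : a ≤ 1 := by linarith
  have hcover : cellSlice q M 0 a ∪ cellSlice q M a 1 = Icc 0 1 := by
    rw [cellSlice_union hq ha ha1, cellSlice_zero_one hq hM, hq0, hqM]
  have hLR := volume_cellSlice_inter (M := M) hq ha ha1
  have hslice : ∀ i {S : Set ℝ}, S ⊆ Icc 0 1 → MeasurableSet S →
      ConstOnGaps E (S.indicator (f i)) → ∀ α β : ℝ, 0 ≤ α → α ≤ β → β ≤ 1 →
      ∫ x in cellSlice q M α β, S.indicator (f i) x = (β - α) * cakeval (f i) S := by
    intro i S hS hSm hSE α β h0 hαβ h1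
    rw [setIntegral_cellSlice hq hM (hcells _ hSE) h0 hαβ h1, hq0, hqM,
      setIntegral_indicator hSm, inter_eq_right.2 hS, cakeval]
  obtain ⟨hC, hCc⟩ := hA.inter_union_inter (finUnionIcc_cellSlice q M 0 a)
    (finUnionIcc_cellSlice q M a 1) hLR hcover.ge hAc hB hBc
  refine ⟨_, ⟨hC, hCc⟩, funext fun i ↦ ?_⟩
  have hint : IntegrableOn (f i) (cellSlice q M 0 a ∪ cellSlice q M a 1) := by
    rw [cellSlice_union hq ha ha1]
    exact integrableOn_cellSlice hq (hcells _ (hE i).1) le_rfl le_rfl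
  show cakeval (f i) _ = a * cakeval (f i) (A i) + b * cakeval (f i) (B i)
  have hAm := (hA.2.1 i).measurableSet
  have hBm := (hB.2.1 i).measurableSet
  rw [cakeval_inter_union_inter hLR (finUnionIcc_cellSlice q M a 1).measurableSet hAm hBm hint,
    hslice i (hA.1 i) hAm (hE i).2.1 0 a le_rfl ha ha1,
    hslice i (hB.1 i) hBm (hE i).2.2 a 1 ha ha1 le_rfl, ← hab]
  ring

end Allocations

theorem le_two_of_sum_le_card {ι : Type*} [Fintype ι] [DecidableEq ι] (i₀ : ι) {x y : ι → ℝ}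
    (hx : ∑ i, x i ≤ Fintype.card ι) (hy : ∑ i, y i ≤ Fintype.card ι) (hy₀ : 0 ≤ y i₀)
    (hxy : ∀ i ≠ i₀, 0 < x i ∧ y i = (x i)⁻¹) : x i₀ ≤ 2 := by
  have hpair : ∀ i ∈ Finset.univ.erase i₀, 2 ≤ x i + y i := fun i hi ↦ by
    obtain ⟨hpos, hyi⟩ := hxy i (Finset.ne_of_mem_erase hi)
    have := mul_inv_cancel₀ hpos.ne'
    rw [hyi]
    nlinarith [sq_nonneg (x i - (x i)⁻¹), inv_pos.2 hpos]
  have hrest := Finset.card_nsmul_le_sum _ _ 2 hpair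
  rw [Finset.card_erase_of_mem (Finset.mem_univ _), Finset.card_univ, nsmul_eq_mul,
    Nat.cast_sub (Fintype.card_pos_iff.2 ⟨i₀⟩)] at hrest
  rw [← Finset.add_sum_erase _ _ (Finset.mem_univ i₀)] at hx hy
  rw [Finset.sum_add_distrib] at hrest
  push_cast at hrest
  linarith

section MNW

variable {N : ℕ} {f : Fin N → ℝ → ℝ} {A B : Fin N → Set ℝ}

theorem IsCompleteMNW.cakeval_pos [NeZero N] (hf : ∀ i, ValidDensity (f i))
    (hA : IsCompleteMNW f A) (i : Fin N) : 0 < cakeval (f i) (A i) :=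
  have hnonneg := completeValues_nonneg fun i ↦ (hf i).2.1
  pos_of_isMaxOn_prod hnonneg ((convex_completeValues fun i ↦ (hf i).1).exists_forall_pos
    hnonneg (exists_mem_completeValues_pos hf)) hA.mem_completeValues hA.isMaxOn i

theorem IsCompleteMNW.sum_div_le [NeZero N] (hf : ∀ i, ValidDensity (f i))
    (hA : IsCompleteMNW f A) (hB : IsAlloc B) (hBc : CompleteAlloc B) :
    ∑ i, cakeval (f i) (B i) / cakeval (f i) (A i) ≤ Fintype.card (Fin N) :=
  sum_div_le_card_of_isMaxOn_prod (convex_completeValues fun i ↦ (hf i).1)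
    hA.mem_completeValues ⟨B, ⟨hB, hBc⟩, rfl⟩ (hA.cakeval_pos hf) hA.isMaxOn

end MNW

/-- Agent 1 is represented by index `0 : Fin (n + 1)`. -/
theorem mnw_incentive_ratio_upper (n : ℕ) (f : Fin (n + 1) → ℝ → ℝ) (f1' : ℝ → ℝ)
    (hf : ∀ i, ValidDensity (f i)) (hf1' : ValidDensity f1')
    (A A' : Fin (n + 1) → Set ℝ)
    (hA : IsCompleteMNW f A)
    (hA' : IsCompleteMNW (Function.update f 0 f1') A') :
    cakeval (f 0) (A' 0) ≤ 2 * cakeval (f 0) (A 0) := by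
  have hf' : ∀ i, ValidDensity (Function.update f 0 f1' i) := fun i ↦ by
    rcases eq_or_ne i 0 with rfl | hi
    · simpa using hf1'
    · simpa [hi] using hf i
  have hratio := le_two_of_sum_le_card 0 (hA.sum_div_le hf hA'.1 hA'.2.1)
    (hA'.sum_div_le hf' hA.1 hA.2.1)
    (div_nonneg (cakeval_nonneg (hf' 0).2.1 (hA.1.2.1 0).measurableSet)
      (hA'.cakeval_pos hf' 0).le)
    fun i hi ↦ by
      have hpos := hA'.cakeval_pos hf' i
      simp only [Function.update_of_ne hi] at hpos ⊢
      exact ⟨div_pos hpos (hA.cakeval_pos hf i), (inv_div _ _).symm⟩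
  rw [div_le_iff₀ (hA.cakeval_pos hf 0)] at hratio
  linarith
end

section
/- Lemma 4.2 (key property of the Partial Allocation mechanism): Fix an agent i, a profile (f_1,…,f_n) of piecewise constant value density functions, and a piecewise constant misreport f_i'. Let A be an MNW allocation with respect to (f_1,…,f_n), let A' be an MNW allocation with respect to the profile in which f_i is replaced by f_i', and let A^i be an MNW allocation of the whole cake among the agents other than i. Define y_i = (∏_{j≠i} v_j(A_j)) / (∏_{j≠i} v_j(A^i_j)) and y_i' = (∏_{j≠i} v_j(A'_j)) / (∏_{j≠i} v_j(A^i_j)). Then y_i · v_i(A_i) ≥ y_i' · v_i(A_i'), where both v_i terms are measured with respect to the true density f_i. -/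
open MeasureTheory Set

/-- An MNW allocation of the whole cake among the agents other than `i`: agent `i`
receives nothing and the allocation maximizes the Nash product of the remaining
agents' values. -/
def IsMNWWithout {n : ℕ} (f : Fin n → ℝ → ℝ) (i : Fin n) (B : Fin n → Set ℝ) : Prop :=
  IsAlloc B ∧ B i = ∅ ∧
    ∀ B' : Fin n → Set ℝ, IsAlloc B' → B' i = ∅ →
      (∏ j ∈ Finset.univ.erase i, cakeval (f j) (B' j)) ≤
        ∏ j ∈ Finset.univ.erase i, cakeval (f j) (B j)

/-- Lemma 4.2 (key property of the Partial Allocation mechanism):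
`y_i · v_i(A_i) ≥ y_i' · v_i(A_i')`, where `A` is MNW for the true profile, `A'` is
MNW for the profile in which agent `i` misreports `fi'`, `A^i` is an MNW allocation
among the other agents, and
`y_i = (∏_{j≠i} v_j(A_j)) / (∏_{j≠i} v_j(A^i_j))`,
`y_i' = (∏_{j≠i} v_j(A'_j)) / (∏_{j≠i} v_j(A^i_j))`. -/
theorem pa_key_property (n : ℕ) (f : Fin (n + 1) → ℝ → ℝ) (i : Fin (n + 1))
    (fi' : ℝ → ℝ) (hf : ∀ j, ValidDensity (f j)) (hfi' : ValidDensity fi')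
    (A A' Ai : Fin (n + 1) → Set ℝ)
    (hA : IsMNW f A) (hA' : IsMNW (Function.update f i fi') A')
    (hAi : IsMNWWithout f i Ai) :
    ((∏ j ∈ Finset.univ.erase i, cakeval (f j) (A' j)) /
        (∏ j ∈ Finset.univ.erase i, cakeval (f j) (Ai j))) * cakeval (f i) (A' i) ≤
      ((∏ j ∈ Finset.univ.erase i, cakeval (f j) (A j)) /
        (∏ j ∈ Finset.univ.erase i, cakeval (f j) (Ai j))) * cakeval (f i) (A i) := by
  have hle : nashProd f A' ≤ nashProd f A := hA.2 A' hA'.1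
  have hP : ∀ B : Fin (n + 1) → Set ℝ, nashProd f B =
      (∏ j ∈ Finset.univ.erase i, cakeval (f j) (B j)) * cakeval (f i) (B i) := by
    intro B
    rw [mul_comm]
    exact (Finset.mul_prod_erase Finset.univ (fun j => cakeval (f j) (B j))
      (Finset.mem_univ i)).symm
  have hD0 : 0 ≤ ∏ j ∈ Finset.univ.erase i, cakeval (f j) (Ai j) :=
    Finset.prod_nonneg fun j _ => integral_nonneg fun x => (hf j).2.1 x
  rcases hD0.eq_or_lt with h | h
  · simp [← h]
  · rw [div_mul_eq_mul_div, div_mul_eq_mul_div, div_le_div_iff₀ h h]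
    rw [hP A, hP A'] at hle
    nlinarith [hle, h.le]
end
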